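/- arXiv:2112.06021 — 2 statements merged into one kernel-verified Lean document; each statement's English description precedes it below -/
import Mathlib

section
/- If a > 0 and x is the unique real root of x^5 + x = a, then a^{4/5} * (x/a) = 1 - ∑_{k=1}^∞ c_k (x/a)^k, where c_1 = 1/5 and c_{k+1} = ((5k-1)/(5(k+1))) c_k, and the series converges. -/
open Real

private lemma bq_c_bound (c : ℕ → ℝ) (hc1 : c 1 = 1 / 5)
    (hrec : ∀ k ≥ 1, c (k + 1) = ((5 * k - 1 : ℝ) / (5 * (k + 1))) * c k) :
    ∀ k : ℕ, 1 ≤ k → 0 < c k ∧ c k ≤ 1 / 5 := by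
  intro k hk
  induction k with
  | zero => omega
  | succ n ih =>
    rcases Nat.lt_or_ge 1 (n + 1) with h | h
    · have hn1 : 1 ≤ n := by omega
      obtain ⟨h1, h2⟩ := ih hn1
      have hcn : (1 : ℝ) ≤ (n : ℝ) := by exact_mod_cast hn1
      have hnum : (0 : ℝ) < 5 * n - 1 := by linarith
      have hden : (0 : ℝ) < 5 * ((n : ℝ) + 1) := by positivity
      have hfrac0 : 0 < (5 * (n : ℝ) - 1) / (5 * ((n : ℝ) + 1)) := div_pos hnum hden
      have hfrac : (5 * (n : ℝ) - 1) / (5 * ((n : ℝ) + 1)) < 1 := by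
        rw [div_lt_one hden]; linarith
      rw [hrec n hn1]
      refine ⟨mul_pos hfrac0 h1, ?_⟩
      calc (5 * (n : ℝ) - 1) / (5 * ((n : ℝ) + 1)) * c n ≤ 1 * c n := by nlinarith
        _ ≤ 1 / 5 := by linarith
    · have hn : n = 0 := by omega
      subst hn
      simp [hc1]

private lemma bq_aux_summable (s : ℝ) (h0 : 0 ≤ s) (h1 : s < 1) :
    Summable (fun k : ℕ => (1 / 5) * (((k : ℝ) + 1) * s ^ k)) := by
  apply Summable.mul_left
  have hA : Summable (fun k : ℕ => (k : ℝ) * s ^ k) := by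
    have := summable_pow_mul_geometric_of_norm_lt_one (R := ℝ) 1
      (r := s) (by rwa [Real.norm_eq_abs, abs_of_nonneg h0])
    simpa using this
  have hB : Summable (fun k : ℕ => s ^ k) := summable_geometric_of_lt_one h0 h1
  simpa [add_mul] using hA.add hB

private lemma bq_aux_bound (c : ℕ → ℝ) (hb : ∀ k : ℕ, 1 ≤ k → 0 < c k ∧ c k ≤ 1 / 5)
    (n : ℕ) {z s : ℝ} (hz : |z| ≤ s) :
    ‖((n : ℝ) + 1) * c (n + 1) * z ^ n‖ ≤ (1 / 5) * (((n : ℝ) + 1) * s ^ n) := by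
  obtain ⟨h1, h2⟩ := hb (n + 1) (by omega)
  have h0s : 0 ≤ s := le_trans (abs_nonneg z) hz
  rw [norm_mul, norm_mul, norm_pow, Real.norm_eq_abs z]
  have hk : ‖((n : ℝ) + 1)‖ = (n : ℝ) + 1 := by
    rw [Real.norm_eq_abs, abs_of_pos]; positivity
  have hc : ‖c (n + 1)‖ ≤ 1 / 5 := by rw [Real.norm_eq_abs, abs_of_pos h1]; exact h2
  rw [hk]
  have hzp : |z| ^ n ≤ s ^ n := pow_le_pow_left₀ (abs_nonneg z) hz n
  have h4 : (0 : ℝ) ≤ (n : ℝ) + 1 := by positivity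
  calc ((n : ℝ) + 1) * ‖c (n + 1)‖ * |z| ^ n
      ≤ ((n : ℝ) + 1) * (1 / 5) * s ^ n := by
        apply mul_le_mul (mul_le_mul_of_nonneg_left hc h4) hzp (by positivity) (by positivity)
    _ = 1 / 5 * (((n : ℝ) + 1) * s ^ n) := by ring

private lemma bq_summable1 (c : ℕ → ℝ) (hb : ∀ k : ℕ, 1 ≤ k → 0 < c k ∧ c k ≤ 1 / 5)
    {y : ℝ} (hy : |y| < 1) : Summable (fun k : ℕ => c (k + 1) * y ^ (k + 1)) := by
  apply Summable.of_norm_bounded (g := fun k : ℕ => (1 / 5) * |y| ^ (k + 1))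
  · have : Summable (fun k : ℕ => (1 / 5 * |y|) * |y| ^ k) :=
      (summable_geometric_of_lt_one (abs_nonneg y) hy).mul_left _
    convert this using 2 with k
    ring
  · intro k
    obtain ⟨h1, h2⟩ := hb (k + 1) (by omega)
    rw [norm_mul, norm_pow]
    have hc : ‖c (k + 1)‖ ≤ 1 / 5 := by rw [Real.norm_eq_abs, abs_of_pos h1]; exact h2
    have h3 : (0 : ℝ) ≤ ‖y‖ ^ (k + 1) := by positivity
    calc ‖c (k + 1)‖ * ‖y‖ ^ (k + 1) ≤ (1 / 5) * ‖y‖ ^ (k + 1) :=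
          mul_le_mul_of_nonneg_right hc h3
      _ = 1 / 5 * |y| ^ (k + 1) := by rw [Real.norm_eq_abs]

private lemma bq_deriv (c : ℕ → ℝ) (hb : ∀ k : ℕ, 1 ≤ k → 0 < c k ∧ c k ≤ 1 / 5)
    {y : ℝ} (hy : |y| < 1) :
    HasDerivAt (fun z : ℝ => ∑' n : ℕ, c (n + 1) * z ^ (n + 1))
      (∑' n : ℕ, ((n : ℝ) + 1) * c (n + 1) * y ^ n) y := by
  set r : ℝ := (|y| + 1) / 2 with hr
  have hy0 : 0 ≤ |y| := abs_nonneg y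
  have hr0 : 0 < r := by rw [hr]; linarith
  have hr1 : r < 1 := by rw [hr]; linarith
  have hyr : |y| < r := by rw [hr]; linarith
  apply hasDerivAt_tsum_of_isPreconnected (bq_aux_summable r hr0.le hr1)
    (isOpen_Ioo (a := -r) (b := r)) isPreconnected_Ioo
    (g := fun n w => c (n + 1) * w ^ (n + 1))
    (g' := fun n z => ((n : ℝ) + 1) * c (n + 1) * z ^ n)
    (y₀ := 0)
  · intro n z _
    have := (hasDerivAt_pow (n + 1) z).const_mul (c (n + 1))
    refine this.congr_deriv ?_
    push_cast
    ring
  · intro n z hz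
    have : |z| ≤ r := le_of_lt (abs_lt.mpr ⟨hz.1, hz.2⟩)
    exact bq_aux_bound c hb n this
  · exact Set.mem_Ioo.mpr ⟨by linarith, hr0⟩
  · simpa using summable_zero
  · exact Set.mem_Ioo.mpr (abs_lt.mp hyr)

private lemma bq_ode (c : ℕ → ℝ) (hc1 : c 1 = 1 / 5)
    (hrec : ∀ k ≥ 1, c (k + 1) = ((5 * k - 1 : ℝ) / (5 * (k + 1))) * c k)
    (hb : ∀ k : ℕ, 1 ≤ k → 0 < c k ∧ c k ≤ 1 / 5)
    {y : ℝ} (hy : |y| < 1) :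
    (1 - y) * ∑' n : ℕ, ((n : ℝ) + 1) * c (n + 1) * y ^ n
      = (1 / 5) * (1 - ∑' n : ℕ, c (n + 1) * y ^ (n + 1)) := by
  have hA : Summable (fun n : ℕ => ((n : ℝ) + 1) * c (n + 1) * y ^ n) :=
    Summable.of_norm_bounded (bq_aux_summable |y| (abs_nonneg y) hy)
      (fun n => bq_aux_bound c hb n le_rfl)
  have hA' : Summable (fun n : ℕ => ((n : ℝ) + 1 + 1) * c (n + 1 + 1) * y ^ (n + 1)) := by
    have h := (summable_nat_add_iff 1).mpr hA
    exact h.congr (fun n => by push_cast; ring)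
  have hB : Summable (fun n : ℕ => ((n : ℝ) + 1) * c (n + 1) * y ^ (n + 1)) :=
    (hA.mul_left y).congr (fun n => by ring)
  have step2 : ∑' n : ℕ, ((n : ℝ) + 1) * c (n + 1) * y ^ n
      = c 1 + ∑' n : ℕ, ((n : ℝ) + 1 + 1) * c (n + 1 + 1) * y ^ (n + 1) := by
    rw [Summable.tsum_eq_zero_add hA]
    congr 1
    · simp
    · apply tsum_congr; intro n; push_cast; ring
  have step1 : y * ∑' n : ℕ, ((n : ℝ) + 1) * c (n + 1) * y ^ n
      = ∑' n : ℕ, ((n : ℝ) + 1) * c (n + 1) * y ^ (n + 1) := by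
    rw [← tsum_mul_left]
    apply tsum_congr; intro n; ring
  have key : ∀ n : ℕ, ((n : ℝ) + 1 + 1) * c (n + 1 + 1) * y ^ (n + 1)
      - ((n : ℝ) + 1) * c (n + 1) * y ^ (n + 1)
      = -(1 / 5) * (c (n + 1) * y ^ (n + 1)) := by
    intro n
    have h := hrec (n + 1) (by omega)
    push_cast at h
    rw [h]
    have hd : (5 : ℝ) * ((n : ℝ) + 1 + 1) ≠ 0 := by positivity
    field_simp
    ring
  calc (1 - y) * ∑' n : ℕ, ((n : ℝ) + 1) * c (n + 1) * y ^ n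
      = (∑' n : ℕ, ((n : ℝ) + 1) * c (n + 1) * y ^ n)
        - y * ∑' n : ℕ, ((n : ℝ) + 1) * c (n + 1) * y ^ n := by ring
    _ = (c 1 + ∑' n : ℕ, ((n : ℝ) + 1 + 1) * c (n + 1 + 1) * y ^ (n + 1))
        - ∑' n : ℕ, ((n : ℝ) + 1) * c (n + 1) * y ^ (n + 1) := by rw [step1, step2]
    _ = c 1 + ∑' n : ℕ, (((n : ℝ) + 1 + 1) * c (n + 1 + 1) * y ^ (n + 1)
        - ((n : ℝ) + 1) * c (n + 1) * y ^ (n + 1)) := by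
          rw [Summable.tsum_sub hA' hB]; ring
    _ = c 1 + ∑' n : ℕ, -(1 / 5) * (c (n + 1) * y ^ (n + 1)) := by
          rw [tsum_congr key]
    _ = c 1 + -(1 / 5) * ∑' n : ℕ, c (n + 1) * y ^ (n + 1) := by rw [tsum_mul_left]
    _ = (1 / 5) * (1 - ∑' n : ℕ, c (n + 1) * y ^ (n + 1)) := by rw [hc1]; ring

private lemma bq_key (c : ℕ → ℝ) (hc1 : c 1 = 1 / 5)
    (hrec : ∀ k ≥ 1, c (k + 1) = ((5 * k - 1 : ℝ) / (5 * (k + 1))) * c k)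
    (t : ℝ) (ht0 : 0 ≤ t) (ht1 : t < 1) :
    1 - ∑' n : ℕ, c (n + 1) * t ^ (n + 1) = (1 - t) ^ ((1 : ℝ) / 5) := by
  have hb := bq_c_bound c hc1 hrec
  set F : ℝ → ℝ := fun z => (1 - z) ^ (-(1 / 5) : ℝ) * (1 - ∑' n : ℕ, c (n + 1) * z ^ (n + 1))
    with hF
  have hd : ∀ y : ℝ, 0 ≤ y → y < 1 → HasDerivAt F 0 y := by
    intro y hy0 hy1
    have h1y : 0 < 1 - y := by linarith
    have hyabs : |y| < 1 := abs_lt.mpr ⟨by linarith, hy1⟩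
    have hS : HasDerivAt (fun z : ℝ => 1 - ∑' n : ℕ, c (n + 1) * z ^ (n + 1))
        (-(∑' n : ℕ, ((n : ℝ) + 1) * c (n + 1) * y ^ n)) y :=
      (bq_deriv c hb hyabs).const_sub 1
    have hR : HasDerivAt (fun z : ℝ => (1 - z) ^ (-(1 / 5) : ℝ))
        ((-1) * (-(1 / 5) : ℝ) * (1 - y) ^ ((-(1 / 5) : ℝ) - 1)) y := by
      have h0 : HasDerivAt (fun z : ℝ => 1 - z) (-1) y := by
        simpa using (hasDerivAt_id y).const_sub 1
      exact h0.rpow_const (Or.inl (ne_of_gt h1y))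
    have hprod := hR.mul hS
    rw [hF]
    refine hprod.congr_deriv ?_
    have hode := bq_ode c hc1 hrec hb hyabs
    have hA : (∑' n : ℕ, ((n : ℝ) + 1) * c (n + 1) * y ^ n)
        = 1 / 5 * (1 - ∑' n : ℕ, c (n + 1) * y ^ (n + 1)) / (1 - y) := by
      rw [← hode]; field_simp
    have hpow : (1 - y) ^ ((-(1 / 5) : ℝ) - 1) = (1 - y) ^ (-(1 / 5) : ℝ) / (1 - y) := by
      rw [Real.rpow_sub h1y, Real.rpow_one]
    rw [hA, hpow]
    field_simp
    ring
  have hcont : ContinuousOn F (Set.Icc 0 t) := fun y hy =>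
    ((hd y hy.1 (lt_of_le_of_lt hy.2 ht1)).continuousAt).continuousWithinAt
  have hconst := constant_of_has_deriv_right_zero hcont
    (fun y hy => (hd y hy.1 (lt_of_lt_of_le hy.2 ht1.le)).hasDerivWithinAt)
  have hFt : F t = F 0 := hconst t (Set.right_mem_Icc.mpr ht0)
  have hF0 : F 0 = 1 := by simp [hF]
  rw [hF0] at hFt
  have h1t : 0 < 1 - t := by linarith
  have hone : (1 - t) ^ ((1 : ℝ) / 5) * (1 - t) ^ (-(1 / 5) : ℝ) = 1 := by
    rw [← Real.rpow_add h1t]; norm_num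
  calc 1 - ∑' n : ℕ, c (n + 1) * t ^ (n + 1)
      = ((1 - t) ^ ((1 : ℝ) / 5) * (1 - t) ^ (-(1 / 5) : ℝ))
        * (1 - ∑' n : ℕ, c (n + 1) * t ^ (n + 1)) := by rw [hone, one_mul]
    _ = (1 - t) ^ ((1 : ℝ) / 5) * F t := by rw [hF]; ring
    _ = (1 - t) ^ ((1 : ℝ) / 5) := by rw [hFt, mul_one]

theorem bring_quintic_series_identity (c : ℕ → ℝ) (hc1 : c 1 = 1 / 5)
    (hrec : ∀ k ≥ 1, c (k + 1) = ((5 * k - 1 : ℝ) / (5 * (k + 1))) * c k)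
    (a x : ℝ) (ha : 0 < a) (hx : x ^ 5 + x = a) :
    Summable (fun k : ℕ => c (k + 1) * (x / a) ^ (k + 1)) ∧
    a ^ ((4 : ℝ) / 5) * (x / a) = 1 - ∑' k : ℕ, c (k + 1) * (x / a) ^ (k + 1) := by
  have hb := bq_c_bound c hc1 hrec
  have hx0 : 0 < x := by nlinarith [sq_nonneg (x ^ 2), sq_nonneg x]
  have hxa : x < a := by nlinarith [pow_pos hx0 5]
  have ht0 : 0 < x / a := div_pos hx0 ha
  have ht1 : x / a < 1 := (div_lt_one ha).mpr hxa
  have habs : |x / a| < 1 := by rw [abs_of_pos ht0]; exact ht1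
  refine ⟨bq_summable1 c hb habs, ?_⟩
  rw [bq_key c hc1 hrec (x / a) ht0.le ht1]
  have h1mt : 1 - x / a = a ^ 4 * (x / a) ^ 5 := by
    field_simp
    linear_combination -(1) * hx
  rw [h1mt, Real.mul_rpow (by positivity) (by positivity)]
  have e1 : ((a : ℝ) ^ (4 : ℕ)) ^ ((1 : ℝ) / 5) = a ^ ((4 : ℝ) / 5) := by
    rw [← Real.rpow_natCast a 4, ← Real.rpow_mul ha.le]; norm_num
  have e2 : ((x / a) ^ (5 : ℕ)) ^ ((1 : ℝ) / 5) = x / a := by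
    rw [← Real.rpow_natCast (x / a) 5, ← Real.rpow_mul ht0.le]; norm_num
  rw [e1, e2]
end

section
/- For any real b with |b| < 1, the double series K_0(b) = 1 + ∑_{m=1}^∞ (-1)^m b^m ∑_{n=0}^{m-1} (-1)^n C(m-1, n) c_{4m+n+1} converges absolutely, where C(m-1,n) is the binomial coefficient and c_k is defined by c_1 = 1/5, c_{k+1} = ((5k-1)/(5(k+1))) c_k. -/
/-!
Up to sign, the inner sum is the `m`-th forward difference `Δᵐ c` at `k = 4m + 5`. The recursion
reads `c (k + 1) = (k - α) / (k + 1) * c k` with `α = 1/5`, and every iterated difference inherits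
such a recursion: `Δʲ c (k + 1) = (k - α) / (k + j + 1) * Δʲ c k`. Consequently
`Δʲ⁺¹ c k = -(j + 1 + α) / (k + j + 1) * Δʲ c k`, a factor of modulus at most `1`, so
`|Δᵐ c k| ≤ |c k| ≤ |c 1|`, and the series is dominated by the geometric series
`|c 1| ∑ |b| ^ (m + 1)`.
-/

open Finset fwdDiff

section HypergeometricDifferences

variable {c : ℕ → ℝ} {α : ℝ}

theorem fwdDiff_iter_apply_add_one_of_ratio
    (hc : ∀ k ≥ 1, c (k + 1) = (k - α) / (k + 1) * c k) (j : ℕ) {k : ℕ} (hk : 1 ≤ k) :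
    (Δ_[1])^[j] c (k + 1) = (k - α) / (k + j + 1) * (Δ_[1])^[j] c k := by
  induction j generalizing k with
  | zero => simpa using hc k hk
  | succ j ih =>
    rw [Function.iterate_succ_apply', fwdDiff, fwdDiff, ih (by omega), ih hk]
    push_cast
    field_simp
    ring

theorem fwdDiff_iter_succ_apply_of_ratio
    (hc : ∀ k ≥ 1, c (k + 1) = (k - α) / (k + 1) * c k) (j : ℕ) {k : ℕ} (hk : 1 ≤ k) :
    (Δ_[1])^[j + 1] c k = -((j + 1 + α) / (k + j + 1)) * (Δ_[1])^[j] c k := by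
  rw [Function.iterate_succ_apply', fwdDiff, fwdDiff_iter_apply_add_one_of_ratio hc j hk]
  field_simp
  ring

theorem abs_le_abs_one_of_ratio
    (hc : ∀ k ≥ 1, c (k + 1) = (k - α) / (k + 1) * c k) (hα : |α| ≤ 1) {k : ℕ}
    (hk : 1 ≤ k) :
    |c k| ≤ |c 1| := by
  refine antitoneOn_nat_Ici_of_succ_le (f := fun k ↦ |c k|) (fun n hn ↦ ?_) (le_refl 1) hk hk
  have hn' : (1 : ℝ) ≤ n := by exact_mod_cast hn
  rw [hc n hn, abs_mul]
  refine mul_le_of_le_one_left (abs_nonneg _) ?_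
  rw [abs_div, abs_of_pos (by positivity : (0 : ℝ) < n + 1), div_le_one (by positivity), abs_le]
  constructor <;> linarith [abs_le.1 hα]

theorem abs_fwdDiff_iter_succ_le_of_ratio
    (hc : ∀ k ≥ 1, c (k + 1) = (k - α) / (k + 1) * c k) (hα : |α| ≤ 1) (j : ℕ) {k : ℕ}
    (hk : 1 ≤ k) : |(Δ_[1])^[j + 1] c k| ≤ |(Δ_[1])^[j] c k| := by
  have hk' : (1 : ℝ) ≤ k := by exact_mod_cast hk
  rw [fwdDiff_iter_succ_apply_of_ratio hc j hk, abs_mul, abs_neg]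
  refine mul_le_of_le_one_left (abs_nonneg _) ?_
  rw [abs_div, abs_of_pos (by positivity : (0 : ℝ) < k + j + 1), div_le_one (by positivity),
    abs_le]
  constructor <;> linarith [abs_le.1 hα, (j.cast_nonneg : (0 : ℝ) ≤ j)]

theorem abs_fwdDiff_iter_le_of_ratio
    (hc : ∀ k ≥ 1, c (k + 1) = (k - α) / (k + 1) * c k) (hα : |α| ≤ 1) (j : ℕ) {k : ℕ}
    (hk : 1 ≤ k) : |(Δ_[1])^[j] c k| ≤ |c 1| := by
  induction j with
  | zero => exact abs_le_abs_one_of_ratio hc hα hk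
  | succ j ih => exact (abs_fwdDiff_iter_succ_le_of_ratio hc hα j hk).trans ih

end HypergeometricDifferences

theorem sum_range_neg_one_pow_mul_choose_mul {R : Type*} [CommRing R] (f : ℕ → R) (m k : ℕ) :
    ∑ n ∈ range (m + 1), (-1 : R) ^ n * m.choose n * f (k + n) =
      (-1) ^ m * (Δ_[1])^[m] f k := by
  rw [fwdDiff_iter_eq_sum_shift, mul_sum]
  refine sum_congr rfl fun n hn ↦ ?_
  have hsign : (-1 : R) ^ m = (-1) ^ n * (-1) ^ (m - n) := by
    rw [← pow_add, Nat.add_sub_cancel' (Nat.lt_succ_iff.1 (mem_range.1 hn))]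
  rw [zsmul_eq_mul, smul_eq_mul, mul_one, hsign]
  have hsq : (-1 : R) ^ (m - n) * (-1) ^ (m - n) = 1 := by rw [← mul_pow]; simp
  push_cast
  linear_combination (-(-1) ^ n * m.choose n * f (k + n) : R) * hsq

theorem K0_double_series_abs_convergent_general (c : ℕ → ℝ)
    (hrec : ∀ k ≥ 1, c (k + 1) = ((5 * k - 1 : ℝ) / (5 * (k + 1))) * c k)
    (b : ℝ) (hb : |b| < 1) :
    Summable (fun m : ℕ =>
      |(-1 : ℝ) ^ (m + 1) * b ^ (m + 1) *
        ∑ n ∈ Finset.range (m + 1),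
          (-1 : ℝ) ^ n * (Nat.choose m n) * c (4 * (m + 1) + n + 1)|) := by
  have hc : ∀ k ≥ 1, c (k + 1) = (k - 1 / 5) / (k + 1) * c k := fun k hk ↦ by
    rw [hrec k hk]
    field_simp
  have hα : |(1 / 5 : ℝ)| ≤ 1 := by norm_num [abs_of_pos]
  refine Summable.of_nonneg_of_le (fun _ ↦ abs_nonneg _) (fun m ↦ ?_)
    ((summable_geometric_of_lt_one (abs_nonneg b) hb).mul_left (|c 1| * |b|))
  simp_rw [add_right_comm (4 * (m + 1)) _ 1]
  rw [sum_range_neg_one_pow_mul_choose_mul]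
  simp only [abs_mul, abs_pow, abs_neg, abs_one, one_pow, one_mul]
  have hΔ := abs_fwdDiff_iter_le_of_ratio hc hα m (k := 4 * (m + 1) + 1) (by omega)
  calc |b| ^ (m + 1) * |(Δ_[1])^[m] c (4 * (m + 1) + 1)| ≤ |b| ^ (m + 1) * |c 1| := by gcongr
    _ = |c 1| * |b| * |b| ^ m := by ring

theorem K0_double_series_abs_convergent (c : ℕ → ℝ) (hc1 : c 1 = 1 / 5)
    (hrec : ∀ k ≥ 1, c (k + 1) = ((5 * k - 1 : ℝ) / (5 * (k + 1))) * c k)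
    (b : ℝ) (hb : |b| < 1) :
    Summable (fun m : ℕ =>
      |(-1 : ℝ) ^ (m + 1) * b ^ (m + 1) *
        ∑ n ∈ Finset.range (m + 1),
          (-1 : ℝ) ^ n * (Nat.choose m n) * c (4 * (m + 1) + n + 1)|) :=
  K0_double_series_abs_convergent_general c hrec b hb
end
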